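/- Let k ≥ 1, g, ε ∈ ℝᵏ, v > 0 with M₂(g) ≥ ξ√v for some ξ > 0, and suppose g and ε point in the same direction. Then (1/k)·(g/√v)·ε ≥ ξ·M₂(ε). -/

import Mathlib

/-! With `g = c • ε` and `c ≥ 0`, `M₂(g) = c · M₂(ε)` and the progress term equals
`c · M₂(ε)² / √v`; multiplying the hypothesis `ξ √v ≤ c · M₂(ε)` by `M₂(ε) / √v` gives the claim. -/

open Finset

section

variable {ι : Type*} [Fintype ι]

lemma sqrt_mul_sum_sq_const_mul (a : ℝ) {c : ℝ} (hc : 0 ≤ c) (ε : ι → ℝ) :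
    √(a * ∑ i, (c * ε i) ^ 2) = c * √(a * ∑ i, ε i ^ 2) := by
  have hsq : a * ∑ i, (c * ε i) ^ 2 = c ^ 2 * (a * ∑ i, ε i ^ 2) := by
    simp only [mul_pow, ← mul_sum]
    ring
  rw [hsq, Real.sqrt_mul (sq_nonneg c), Real.sqrt_sq hc]

lemma mul_sum_const_mul_div_mul (a c s : ℝ) (ε : ι → ℝ) :
    a * ∑ i, (c * ε i / s) * ε i = c / s * (a * ∑ i, ε i ^ 2) := by
  simp only [mul_sum]
  exact sum_congr rfl fun i _ => by ring

end

lemma mul_le_div_mul_sq_of_mul_le {ξ c s m : ℝ} (hs : 0 < s) (hm : 0 ≤ m)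
    (h : ξ * s ≤ c * m) : ξ * m ≤ c / s * m ^ 2 :=
  calc ξ * m = ξ * s * m / s := by field_simp
    _ ≤ c * m * m / s := by gcongr
    _ = c / s * m ^ 2 := by ring

theorem amos_progress_lower_bound_general (k : ℕ) (g ε : Fin k → ℝ) (v ξ : ℝ)
    (hv : 0 < v)
    (hM2g : ξ * Real.sqrt v ≤ Real.sqrt ((1 / (k : ℝ)) * ∑ i, g i ^ 2))
    (c : ℝ) (hc : 0 ≤ c) (hg : g = fun i => c * ε i) :
    ξ * Real.sqrt ((1 / (k : ℝ)) * ∑ i, ε i ^ 2) ≤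
      (1 / (k : ℝ)) * ∑ i, (g i / Real.sqrt v) * ε i := by
  subst hg
  have hS : 0 ≤ (1 / (k : ℝ)) * ∑ i, ε i ^ 2 := by positivity
  rw [sqrt_mul_sum_sq_const_mul _ hc] at hM2g
  rw [mul_sum_const_mul_div_mul]
  simpa only [Real.sq_sqrt hS] using
    mul_le_div_mul_sq_of_mul_le (Real.sqrt_pos.2 hv) (Real.sqrt_nonneg _) hM2g

theorem amos_progress_lower_bound (k : ℕ) (hk : 1 ≤ k) (g ε : Fin k → ℝ) (v ξ : ℝ)
    (hv : 0 < v) (hξ : 0 < ξ)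
    (hM2g : ξ * Real.sqrt v ≤ Real.sqrt ((1 / (k : ℝ)) * ∑ i, g i ^ 2))
    (c : ℝ) (hc : 0 ≤ c) (hg : g = fun i => c * ε i) :
    ξ * Real.sqrt ((1 / (k : ℝ)) * ∑ i, ε i ^ 2) ≤
      (1 / (k : ℝ)) * ∑ i, (g i / Real.sqrt v) * ε i :=
  amos_progress_lower_bound_general k g ε v ξ hv hM2g c hc hg
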